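/- arXiv:2211.02471 — 2 statements merged into one kernel-verified Lean document; each statement's English description precedes it below -/
import Mathlib

section
/- In R = Q[a,b,c,d,e,f], the ideal I = ⟨b(cf − a²), bde, de(c² + ac + de + f²)⟩ satisfies N_{b,I} = ⟨acde + c²de + d²e² + def²⟩ and a² − cf ∈ C_{b,I}, where C and N are computed with respect to a b-compatible lexicographic order with b largest. -/
open MvPolynomial

noncomputable section

/-- The initial `y`-form of a polynomial: if `f = ∑ αᵢ yⁱ` with the `αᵢ` not involving `y`,
then `inyForm y f = α_d y^d` where `d` is maximal with `α_d ≠ 0`. -/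
def inyForm {k : Type} [Field k] {n : ℕ} (y : Fin n) (f : MvPolynomial (Fin n) k) :
    MvPolynomial (Fin n) k :=
  ∑ m ∈ f.support.filter (fun m => m y = f.degreeOf y), monomial m (f.coeff m)

/-- The ideal generated by all initial `y`-forms of elements of `I`. -/
def inyIdeal {k : Type} [Field k] {n : ℕ} (y : Fin n) (I : Ideal (MvPolynomial (Fin n) k)) :
    Ideal (MvPolynomial (Fin n) k) :=
  Ideal.span { p | ∃ f ∈ I, p = inyForm y f }

/-- For `g = q y^d + r` with `in_y(g) = q y^d` and `y` not dividing any term of `q`,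
`qPart y g` is the polynomial `q`. -/
def qPart {k : Type} [Field k] {n : ℕ} (y : Fin n) (g : MvPolynomial (Fin n) k) :
    MvPolynomial (Fin n) k :=
  ∑ m ∈ g.support.filter (fun m => m y = g.degreeOf y),
    monomial (m - Finsupp.single y (g.degreeOf y)) (g.coeff m)

/-- The ideal `C_{y,I}` computed from a (Gröbner) generating set `G`. -/
def CIdeal {k : Type} [Field k] {n : ℕ} (y : Fin n) (G : Finset (MvPolynomial (Fin n) k)) :
    Ideal (MvPolynomial (Fin n) k) :=
  Ideal.span (qPart y '' (G : Set (MvPolynomial (Fin n) k)))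

/-- The ideal `N_{y,I}` computed from a (Gröbner) generating set `G`:
generated by those `q_i` with `d_i = 0`. -/
def NIdeal {k : Type} [Field k] {n : ℕ} (y : Fin n) (G : Finset (MvPolynomial (Fin n) k)) :
    Ideal (MvPolynomial (Fin n) k) :=
  Ideal.span (qPart y '' { g | g ∈ G ∧ g.degreeOf y = 0 })

/-- `μ` is the leading monomial of `f` with respect to the monomial order `m`. -/
def LeadMonomialIs {k : Type} [Field k] {n : ℕ} (m : MonomialOrder (Fin n))
    (f : MvPolynomial (Fin n) k) (μ : Fin n →₀ ℕ) : Prop :=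
  μ ∈ f.support ∧ ∀ ν ∈ f.support, m.toSyn ν ≤ m.toSyn μ

/-- `t` is the initial term `in_<(f)` of `f` with respect to the monomial order `m`. -/
def InitialTermIs {k : Type} [Field k] {n : ℕ} (m : MonomialOrder (Fin n))
    (f t : MvPolynomial (Fin n) k) : Prop :=
  ∃ μ, LeadMonomialIs m f μ ∧ t = monomial μ (f.coeff μ)

/-- A monomial order `m` is `y`-compatible if `in_<(f) = in_<(in_y(f))` for all `f`. -/
def YCompatible (k : Type) [Field k] {n : ℕ} (m : MonomialOrder (Fin n)) (y : Fin n) : Prop :=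
  ∀ f : MvPolynomial (Fin n) k, f ≠ 0 →
    ∀ t, InitialTermIs m f t ↔ InitialTermIs m (inyForm y f) t

/-- `G` is a Gröbner basis of `I` with respect to the monomial order `m`:
`G ⊆ I` and the leading monomial of every nonzero element of `I` is divisible by the
leading monomial of some element of `G`. -/
def IsGB {k : Type} [Field k] {n : ℕ} (m : MonomialOrder (Fin n))
    (I : Ideal (MvPolynomial (Fin n) k)) (G : Finset (MvPolynomial (Fin n) k)) : Prop :=
  (G : Set (MvPolynomial (Fin n) k)) ⊆ I ∧ (0 : MvPolynomial (Fin n) k) ∉ G ∧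
    ∀ f ∈ I, f ≠ 0 → ∃ g ∈ G, ∃ μ ν, LeadMonomialIs m g μ ∧ LeadMonomialIs m f ν ∧ μ ≤ ν

namespace KRAux

variable {k : Type} [Field k] {n : ℕ}

/-- the `y`-degree-`d` slice of `f` -/
def slice (y : Fin n) (d : ℕ) (f : MvPolynomial (Fin n) k) : MvPolynomial (Fin n) k :=
  ∑ m ∈ f.support.filter (fun m => m y = d), monomial m (f.coeff m)

lemma inyForm_eq_slice (y : Fin n) (f : MvPolynomial (Fin n) k) :
    inyForm y f = slice y (f.degreeOf y) f := rfl

lemma coeff_slice (y : Fin n) (d : ℕ) (f : MvPolynomial (Fin n) k) (τ : Fin n →₀ ℕ) :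
    (slice y d f).coeff τ = if τ y = d then f.coeff τ else 0 := by
  classical
  rw [slice, coeff_sum]
  simp only [coeff_monomial]
  rw [Finset.sum_ite_eq' _ τ (fun m => f.coeff m)]
  simp only [Finset.mem_filter, mem_support_iff]
  split_ifs <;> simp_all

lemma slice_sub (y : Fin n) (d : ℕ) (f g : MvPolynomial (Fin n) k) :
    slice y d (f - g) = slice y d f - slice y d g := by
  ext τ
  simp only [coeff_sub, coeff_slice]
  split_ifs <;> simp

lemma slice_zero (y : Fin n) (d : ℕ) : slice y d (0 : MvPolynomial (Fin n) k) = 0 := by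
  simp [slice]

lemma slice_monomial_mul (y : Fin n) (d : ℕ) (σ : Fin n →₀ ℕ) (c : k)
    (g : MvPolynomial (Fin n) k) (hσ : σ y ≤ d) :
    slice y d (monomial σ c * g) = monomial σ c * slice y (d - σ y) g := by
  ext τ
  rw [coeff_slice, coeff_monomial_mul', coeff_monomial_mul', coeff_slice]
  by_cases hστ : σ ≤ τ
  · have hy : σ y ≤ τ y := Finsupp.le_def.mp hστ y
    have htsub : (τ - σ) y = τ y - σ y := Finsupp.tsub_apply τ σ y
    rw [if_pos hστ, if_pos hστ, htsub]
    by_cases h : τ y = d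
    · rw [if_pos h, if_pos (by omega)]
    · rw [if_neg h, if_neg (by omega), mul_zero]
  · rw [if_neg hστ, if_neg hστ, ite_self]

lemma exists_lm (mo : MonomialOrder (Fin n)) (f : MvPolynomial (Fin n) k) (hf : f ≠ 0) :
    ∃ ν, LeadMonomialIs mo f ν := by
  obtain ⟨ν, hν, hmax⟩ := Finset.exists_max_image f.support (fun τ => mo.toSyn τ)
    (support_nonempty.mpr hf)
  exact ⟨ν, hν, hmax⟩

lemma lm_apply_y {mo : MonomialOrder (Fin n)} {y : Fin n} (hyc : YCompatible k mo y)
    {f : MvPolynomial (Fin n) k} (hf : f ≠ 0) {ν} (hν : LeadMonomialIs mo f ν) :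
    ν y = f.degreeOf y := by
  have h1 : InitialTermIs mo f (monomial ν (f.coeff ν)) := ⟨ν, hν, rfl⟩
  obtain ⟨μ', hμ', heq⟩ := (hyc f hf _).mp h1
  have hc : f.coeff ν ≠ 0 := mem_support_iff.mp hν.1
  have hμν : μ' = ν := by
    by_contra hne
    have h2 := congrArg (coeff ν) heq
    rw [coeff_monomial, coeff_monomial, if_pos rfl, if_neg hne] at h2
    exact hc h2
  subst hμν
  have h3 := hμ'.1
  rw [mem_support_iff, inyForm_eq_slice, coeff_slice] at h3
  by_contra h
  rw [if_neg h] at h3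
  exact h3 rfl

lemma degreeOf_eq_of_support (y : Fin n) (e : ℕ) {f : MvPolynomial (Fin n) k} (hf : f ≠ 0)
    (h : ∀ τ ∈ f.support, τ y = e) : f.degreeOf y = e := by
  obtain ⟨τ0, hτ0⟩ := support_nonempty.mpr hf
  apply le_antisymm
  · exact degreeOf_le_iff.mpr (fun τ hτ => le_of_eq (h τ hτ))
  · exact (h τ0 hτ0) ▸ monomial_le_degreeOf y hτ0

lemma inyForm_eq_self (y : Fin n) (e : ℕ) {f : MvPolynomial (Fin n) k} (hf : f ≠ 0)
    (h : ∀ τ ∈ f.support, τ y = e) : inyForm y f = f := by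
  rw [inyForm_eq_slice, degreeOf_eq_of_support y e hf h, slice,
    Finset.filter_true_of_mem h]
  exact support_sum_monomial_coeff f

lemma qPart_of_deg0 (y : Fin n) {g : MvPolynomial (Fin n) k} (h : g.degreeOf y = 0) :
    qPart y g = g := by
  rw [qPart, h]
  have hall : ∀ m ∈ g.support, m y = 0 :=
    fun m hm => Nat.le_zero.mp (h ▸ monomial_le_degreeOf y hm)
  rw [Finset.filter_true_of_mem hall]
  simp only [Finsupp.single_zero, tsub_zero]
  exact support_sum_monomial_coeff g

lemma inyForm_eq_monomial_mul_qPart (y : Fin n) (g : MvPolynomial (Fin n) k) :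
    inyForm y g = monomial (Finsupp.single y (g.degreeOf y)) 1 * qPart y g := by
  rw [inyForm, qPart, Finset.mul_sum]
  refine Finset.sum_congr rfl (fun m hm => ?_)
  rw [monomial_mul, one_mul, add_tsub_cancel_of_le
    (Finsupp.single_le_iff.mpr (le_of_eq (Finset.mem_filter.mp hm).2.symm))]

lemma qPart_apply_y_eq_zero (y : Fin n) (g : MvPolynomial (Fin n) k) :
    ∀ τ ∈ (qPart y g).support, τ y = 0 := by
  intro τ hτ
  rw [mem_support_iff, qPart, coeff_sum] at hτ
  obtain ⟨m, hm, hne⟩ := Finset.exists_ne_zero_of_sum_ne_zero hτ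
  rw [coeff_monomial] at hne
  have hmτ : m - Finsupp.single y (g.degreeOf y) = τ := by
    by_contra h
    rw [if_neg h] at hne
    exact hne rfl
  rw [← hmτ, Finsupp.tsub_apply, Finsupp.single_eq_same, (Finset.mem_filter.mp hm).2,
    Nat.sub_self]

lemma support_monomial_mul_apply (y : Fin n) (e : ℕ) (c : k) {u : MvPolynomial (Fin n) k}
    (hu : ∀ τ ∈ u.support, τ y = 0) :
    ∀ τ ∈ (monomial (Finsupp.single y e) c * u).support, τ y = e := by
  intro τ hτ
  rw [mem_support_iff, coeff_monomial_mul'] at hτ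
  by_cases h : Finsupp.single y e ≤ τ
  · rw [if_pos h] at hτ
    have h2 : (τ - Finsupp.single y e) y = 0 :=
      hu _ (mem_support_iff.mpr (fun hc => hτ (by rw [hc, mul_zero])))
    have h3 : e ≤ τ y := Finsupp.single_le_iff.mp h
    rw [Finsupp.tsub_apply, Finsupp.single_eq_same] at h2
    omega
  · rw [if_neg h] at hτ
    exact absurd rfl hτ

/-- `f` has no occurrence of the variable `y`. -/
def BFree (y : Fin n) (f : MvPolynomial (Fin n) k) : Prop := ∀ τ ∈ f.support, τ y = 0

lemma BFree.mul {y : Fin n} {f g : MvPolynomial (Fin n) k} (hf : BFree y f) (hg : BFree y g) :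
    BFree y (f * g) := by
  classical
  intro τ hτ
  obtain ⟨a, ha, b, hb, rfl⟩ := Finset.mem_add.mp (support_mul f g hτ)
  rw [Finsupp.add_apply, hf a ha, hg b hb]

lemma BFree.add {y : Fin n} {f g : MvPolynomial (Fin n) k} (hf : BFree y f) (hg : BFree y g) :
    BFree y (f + g) := by
  classical
  intro τ hτ
  rcases Finset.mem_union.mp (support_add hτ) with h | h
  · exact hf τ h
  · exact hg τ h

lemma BFree.sub {y : Fin n} {f g : MvPolynomial (Fin n) k} (hf : BFree y f) (hg : BFree y g) :
    BFree y (f - g) := by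
  classical
  intro τ hτ
  rcases Finset.mem_union.mp (support_sub _ f g hτ) with h | h
  · exact hf τ h
  · exact hg τ h

lemma bFree_X {y i : Fin n} (h : i ≠ y) : BFree y (X i : MvPolynomial (Fin n) k) := by
  intro τ hτ
  rw [support_X, Finset.mem_singleton] at hτ
  subst hτ
  exact Finsupp.single_eq_of_ne' h

lemma bFree_X_pow {y i : Fin n} (h : i ≠ y) (e : ℕ) :
    BFree y (X i ^ e : MvPolynomial (Fin n) k) := by
  intro τ hτ
  rw [support_X_pow, Finset.mem_singleton] at hτ
  subst hτ
  exact Finsupp.single_eq_of_ne' h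

/-- Key lemma: if `G` is a Gröbner basis of `I` w.r.t. a `y`-compatible order, then the initial
`y`-form of any nonzero element of `I` lies in the ideal generated by the initial `y`-forms of
the elements of `G`. -/
lemma iny_mem {mo : MonomialOrder (Fin n)} {y : Fin n} (hyc : YCompatible k mo y)
    {I : Ideal (MvPolynomial (Fin n) k)} {G : Finset (MvPolynomial (Fin n) k)}
    (hGI : (G : Set (MvPolynomial (Fin n) k)) ⊆ I)
    (hdiv : ∀ f ∈ I, f ≠ 0 →
      ∃ g ∈ G, ∃ μ ν, LeadMonomialIs mo g μ ∧ LeadMonomialIs mo f ν ∧ μ ≤ ν)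
    {f : MvPolynomial (Fin n) k} (hfI : f ∈ I) (hf0 : f ≠ 0) :
    inyForm y f ∈ Ideal.span (inyForm y '' (G : Set (MvPolynomial (Fin n) k))) := by
  classical
  set T := Ideal.span (inyForm y '' (G : Set (MvPolynomial (Fin n) k))) with hT
  obtain ⟨ν0, hν0⟩ := exists_lm mo f hf0
  suffices H : ∀ s : mo.syn, ∀ f : MvPolynomial (Fin n) k, f ∈ I → f ≠ 0 →
      ∀ ν, LeadMonomialIs mo f ν → mo.toSyn ν = s → inyForm y f ∈ T from
    H (mo.toSyn ν0) f hfI hf0 ν0 hν0 rfl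
  clear hfI hf0 hν0
  intro s
  induction s using WellFoundedLT.induction with
  | _ s IH =>
  rintro f hfI hf0 ν hν rfl
  obtain ⟨g, hgG, μ, ν', hgμ, hfν', hle⟩ := hdiv f hfI hf0
  have hν'ν : ν' = ν := mo.toSyn.injective (le_antisymm (hν.2 ν' hfν'.1) (hfν'.2 ν hν.1))
  rw [hν'ν] at hle
  have hg0 : g ≠ 0 := fun h => by simp [h, LeadMonomialIs] at hgμ
  have hgc : g.coeff μ ≠ 0 := mem_support_iff.mp hgμ.1
  have hfc : f.coeff ν ≠ 0 := mem_support_iff.mp hν.1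
  set d := f.degreeOf y with hd
  set dg := g.degreeOf y with hdg
  have hνy : ν y = d := lm_apply_y hyc hf0 hν
  have hμy : μ y = dg := lm_apply_y hyc hg0 hgμ
  have hdgd : dg ≤ d := by
    rw [← hνy, ← hμy]
    exact Finsupp.le_def.mp hle y
  set c := f.coeff ν / g.coeff μ with hc
  set σ := ν - μ with hσ
  have hσμ : σ + μ = ν := tsub_add_cancel_of_le hle
  have hσy : σ y = d - dg := by rw [hσ, Finsupp.tsub_apply, hνy, hμy]
  set f' := f - monomial σ c * g with hf'
  have hf'I : f' ∈ I := I.sub_mem hfI (I.mul_mem_left _ (hGI hgG))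
  have hνf' : f'.coeff ν = 0 := by
    rw [hf', coeff_sub, coeff_monomial_mul', if_pos (by rw [hσ]; exact tsub_le_self),
      show ν - σ = μ from by rw [hσ]; exact tsub_tsub_cancel_of_le hle,
      hc, div_mul_cancel₀ _ hgc, sub_self]
  have hsupf' : ∀ τ ∈ f'.support, mo.toSyn τ < mo.toSyn ν := by
    intro τ hτ
    have hτν : τ ≠ ν := fun h => (mem_support_iff.mp hτ) (h ▸ hνf')
    have hτle : mo.toSyn τ ≤ mo.toSyn ν := by
      rcases Finset.mem_union.mp (support_sub _ _ _ hτ) with h | h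
      · exact hν.2 τ h
      · rw [mem_support_iff, coeff_monomial_mul'] at h
        by_cases hστ : σ ≤ τ
        · rw [if_pos hστ] at h
          have h2 : τ - σ ∈ g.support :=
            mem_support_iff.mpr (fun hc0 => h (by rw [hc0, mul_zero]))
          calc mo.toSyn τ = mo.toSyn σ + mo.toSyn (τ - σ) := by
                rw [← map_add, add_tsub_cancel_of_le hστ]
            _ ≤ mo.toSyn σ + mo.toSyn μ := add_le_add_right (hgμ.2 _ h2) _
            _ = mo.toSyn ν := by rw [← map_add, hσμ]
        · rw [if_neg hστ] at h
          exact absurd rfl h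
    exact lt_of_le_of_ne hτle (fun h => hτν (mo.toSyn.injective h))
  have hkey : slice y d f = slice y d f' + monomial σ c * slice y dg g := by
    rw [hf', slice_sub, slice_monomial_mul y d σ c g (by omega),
      show d - σ y = dg from by omega]
    ring
  have hgT : monomial σ c * slice y dg g ∈ T :=
    Ideal.mul_mem_left _ _ (Ideal.subset_span ⟨g, hgG, (inyForm_eq_slice y g).symm⟩)
  rw [inyForm_eq_slice, ← hd, hkey]
  by_cases hz : slice y d f' = 0
  · rw [hz, zero_add]
    exact hgT
  · have hf'0 : f' ≠ 0 := fun h => hz (by rw [h, slice_zero])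
    have hdle : f'.degreeOf y ≤ d := by
      rw [degreeOf_le_iff]
      intro τ hτ
      rcases Finset.mem_union.mp (support_sub _ _ _ hτ) with h | h
      · exact hd ▸ monomial_le_degreeOf y h
      · rw [mem_support_iff, coeff_monomial_mul'] at h
        by_cases hστ : σ ≤ τ
        · rw [if_pos hστ] at h
          have h2 : τ - σ ∈ g.support :=
            mem_support_iff.mpr (fun hc0 => h (by rw [hc0, mul_zero]))
          have h3 : (τ - σ) y ≤ dg := hdg ▸ monomial_le_degreeOf y h2
          have h4 : σ y ≤ τ y := Finsupp.le_def.mp hστ y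
          have h5 : (τ - σ) y = τ y - σ y := Finsupp.tsub_apply τ σ y
          omega
        · rw [if_neg hστ] at h
          exact absurd rfl h
    have hd' : f'.degreeOf y = d := by
      obtain ⟨τ, hτ⟩ := ne_zero_iff.mp hz
      rw [coeff_slice] at hτ
      by_cases hτy : τ y = d
      · rw [if_pos hτy] at hτ
        have := monomial_le_degreeOf y (mem_support_iff.mpr hτ)
        omega
      · rw [if_neg hτy] at hτ
        exact absurd rfl hτ
    obtain ⟨ν₂, hν₂⟩ := exists_lm mo f' hf'0
    rw [show slice y d f' = inyForm y f' from by rw [inyForm_eq_slice, hd']]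
    exact Ideal.add_mem _ (IH _ (hsupf' ν₂ hν₂.1) f' hf'I hf'0 ν₂ hν₂ rfl) hgT

lemma aeval_eq_self_of_yfree (y : Fin n) (t : MvPolynomial (Fin n) k)
    {g : MvPolynomial (Fin n) k} (hg : BFree y g) :
    aeval (fun i => if i = y then t else X i) g = g := by
  conv_rhs => rw [← support_sum_monomial_coeff g]
  conv_lhs => rw [← support_sum_monomial_coeff g]
  rw [map_sum]
  refine Finset.sum_congr rfl (fun τ hτ => ?_)
  rw [aeval_monomial, monomial_eq, algebraMap_eq]
  congr 1
  refine Finsupp.prod_congr (fun i hi => ?_)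
  rw [if_neg]
  intro h
  subst h
  exact (Finsupp.mem_support_iff.mp hi) (hg τ hτ)

lemma aeval_y_monomial (y : Fin n) (t : MvPolynomial (Fin n) k) (e : ℕ) :
    aeval (fun i => if i = y then t else X i) (monomial (Finsupp.single y e) (1 : k)) = t ^ e := by
  rw [aeval_monomial, map_one, one_mul, Finsupp.prod_single_index (by simp), if_pos rfl]

end KRAux

open KRAux

/-- in `ℚ[a,…,f]` (with `a = X 0, …, f = X 5`), for the ideal
`I = ⟨b(cf − a²), bde, de(c² + ac + de + f²)⟩` and any `b`-compatible monomial order and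
Gröbner basis, `N_{b,I} = ⟨acde + c²de + d²e² + def²⟩` and `a² − cf ∈ C_{b,I}`. -/
theorem KR_example_2_16_N_and_C
    (m : MonomialOrder (Fin 6)) (hyc : YCompatible ℚ m 1)
    (G : Finset (MvPolynomial (Fin 6) ℚ))
    (hGB : IsGB m (Ideal.span {X 1 * (X 2 * X 5 - X 0 ^ 2), X 1 * X 3 * X 4,
      X 3 * X 4 * (X 2 ^ 2 + X 0 * X 2 + X 3 * X 4 + X 5 ^ 2)}) G) :
    NIdeal 1 G = Ideal.span {X 0 * X 2 * X 3 * X 4 + X 2 ^ 2 * X 3 * X 4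
        + X 3 ^ 2 * X 4 ^ 2 + X 3 * X 4 * X 5 ^ 2} ∧
    (X 0 ^ 2 - X 2 * X 5 : MvPolynomial (Fin 6) ℚ) ∈ CIdeal 1 G := by
  classical
  obtain ⟨hGI, hG0, hdiv⟩ := hGB
  set g1 : MvPolynomial (Fin 6) ℚ := X 1 * (X 2 * X 5 - X 0 ^ 2) with hg1def
  set g2 : MvPolynomial (Fin 6) ℚ := X 1 * X 3 * X 4 with hg2def
  set g3 : MvPolynomial (Fin 6) ℚ :=
    X 3 * X 4 * (X 2 ^ 2 + X 0 * X 2 + X 3 * X 4 + X 5 ^ 2) with hg3def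
  set p : MvPolynomial (Fin 6) ℚ := X 0 * X 2 * X 3 * X 4 + X 2 ^ 2 * X 3 * X 4
    + X 3 ^ 2 * X 4 ^ 2 + X 3 * X 4 * X 5 ^ 2 with hpdef
  set ISpan : Ideal (MvPolynomial (Fin 6) ℚ) := Ideal.span {g1, g2, g3} with hI
  set T : Ideal (MvPolynomial (Fin 6) ℚ) :=
    Ideal.span (inyForm 1 '' (G : Set (MvPolynomial (Fin 6) ℚ))) with hT
  set φ0 : MvPolynomial (Fin 6) ℚ →ₐ[ℚ] MvPolynomial (Fin 6) ℚ :=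
    aeval (fun i => if i = 1 then 0 else X i) with hφ0
  set φ1 : MvPolynomial (Fin 6) ℚ →ₐ[ℚ] MvPolynomial (Fin 6) ℚ :=
    aeval (fun i => if i = 1 then 1 else X i) with hφ1
  -- basic B-freeness facts
  have hbu : BFree 1 (X 2 * X 5 - X 0 ^ 2 : MvPolynomial (Fin 6) ℚ) :=
    BFree.sub (BFree.mul (bFree_X (by decide)) (bFree_X (by decide))) (bFree_X_pow (by decide) 2)
  have hbg3 : BFree 1 g3 := by
    rw [hg3def]
    exact BFree.mul (BFree.mul (bFree_X (by decide)) (bFree_X (by decide)))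
      (BFree.add (BFree.add (BFree.add (bFree_X_pow (by decide) 2)
        (BFree.mul (bFree_X (by decide)) (bFree_X (by decide))))
        (BFree.mul (bFree_X (by decide)) (bFree_X (by decide)))) (bFree_X_pow (by decide) 2))
  have hbp : BFree 1 p := by
    rw [hpdef]
    exact BFree.add (BFree.add (BFree.add
      (BFree.mul (BFree.mul (BFree.mul (bFree_X (by decide)) (bFree_X (by decide)))
        (bFree_X (by decide))) (bFree_X (by decide)))
      (BFree.mul (BFree.mul (bFree_X_pow (by decide) 2) (bFree_X (by decide)))
        (bFree_X (by decide))))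
      (BFree.mul (bFree_X_pow (by decide) 2) (bFree_X_pow (by decide) 2)))
      (BFree.mul (BFree.mul (bFree_X (by decide)) (bFree_X (by decide)))
        (bFree_X_pow (by decide) 2))
  -- nonvanishing via evaluation at a = 0, other variables = 1
  have hp0 : p ≠ 0 := by
    intro h
    have h2 := congrArg (eval (fun i : Fin 6 => if i = 0 then (0 : ℚ) else 1)) h
    rw [hpdef] at h2
    norm_num [show (2:Fin 6) ≠ 0 by decide, show (3:Fin 6) ≠ 0 by decide, show (4:Fin 6) ≠ 0 by decide, show (5:Fin 6) ≠ 0 by decide, show (1:Fin 6) ≠ 0 by decide] at h2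
  have hg10 : g1 ≠ 0 := by
    intro h
    have h2 := congrArg (eval (fun i : Fin 6 => if i = 0 then (0 : ℚ) else 1)) h
    rw [hg1def] at h2
    norm_num [show (2:Fin 6) ≠ 0 by decide, show (3:Fin 6) ≠ 0 by decide, show (4:Fin 6) ≠ 0 by decide, show (5:Fin 6) ≠ 0 by decide, show (1:Fin 6) ≠ 0 by decide] at h2
  -- mapping the ideal T
  have hmapT0 : Ideal.map φ0 T ≤ NIdeal 1 G := by
    rw [hT, Ideal.map_span]
    apply Ideal.span_le.mpr
    rintro _ ⟨_, ⟨g, hgG, rfl⟩, rfl⟩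
    rw [inyForm_eq_monomial_mul_qPart, map_mul, hφ0, aeval_y_monomial,
      aeval_eq_self_of_yfree 1 0 (qPart_apply_y_eq_zero 1 g)]
    by_cases hdg : g.degreeOf 1 = 0
    · rw [hdg, pow_zero, one_mul]
      exact Ideal.subset_span ⟨g, ⟨hgG, hdg⟩, rfl⟩
    · rw [zero_pow hdg, zero_mul]
      exact (NIdeal 1 G).zero_mem
  have hmapT1 : Ideal.map φ1 T ≤ CIdeal 1 G := by
    rw [hT, Ideal.map_span]
    apply Ideal.span_le.mpr
    rintro _ ⟨_, ⟨g, hgG, rfl⟩, rfl⟩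
    rw [inyForm_eq_monomial_mul_qPart, map_mul, hφ1, aeval_y_monomial,
      aeval_eq_self_of_yfree 1 1 (qPart_apply_y_eq_zero 1 g), one_pow, one_mul]
    exact Ideal.subset_span ⟨g, hgG, rfl⟩
  constructor
  · -- the N statement
    apply le_antisymm
    · -- NIdeal ≤ ⟨p⟩
      apply Ideal.span_le.mpr
      rintro _ ⟨g, ⟨hgG, hdg⟩, rfl⟩
      rw [qPart_of_deg0 1 hdg]
      have hbf : BFree 1 g := fun τ hτ => Nat.le_zero.mp (hdg ▸ monomial_le_degreeOf 1 hτ)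
      have hgI : g ∈ ISpan := hGI hgG
      have hmem : φ0 g ∈ Ideal.map φ0 ISpan := Ideal.mem_map_of_mem _ hgI
      rw [hI, Ideal.map_span] at hmem
      rw [← aeval_eq_self_of_yfree 1 0 hbf, ← hφ0]
      refine Ideal.span_le.mpr ?_ hmem
      rintro _ ⟨q, hq, rfl⟩
      simp only [Set.mem_insert_iff, Set.mem_singleton_iff] at hq
      rcases hq with rfl | rfl | rfl
      · have hx : φ0 (X 1) = 0 := by rw [hφ0]; simp
        rw [hg1def, map_mul, hx, zero_mul]
        exact Ideal.zero_mem _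
      · have hx : φ0 (X 1) = 0 := by rw [hφ0]; simp
        rw [hg2def, map_mul, map_mul, hx, zero_mul, zero_mul]
        exact Ideal.zero_mem _
      · rw [hφ0, aeval_eq_self_of_yfree 1 0 hbg3]
        refine Ideal.subset_span ?_
        rw [Set.mem_singleton_iff, hg3def, hpdef]
        ring
    · -- ⟨p⟩ ≤ NIdeal
      apply Ideal.span_le.mpr
      rw [Set.singleton_subset_iff]
      have hpI : p ∈ ISpan := by
        rw [show p = g3 from by rw [hpdef, hg3def]; ring]
        exact Ideal.subset_span (by simp)
      have hiny : inyForm 1 p = p := inyForm_eq_self 1 0 hp0 hbp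
      have hpT : p ∈ T := by
        rw [← hiny, hT]
        exact iny_mem hyc hGI hdiv hpI hp0
      have h2 : p ∈ Ideal.map φ0 T := by
        have h3 := Ideal.mem_map_of_mem φ0 hpT
        rwa [show φ0 p = p from by rw [hφ0]; exact aeval_eq_self_of_yfree 1 0 hbp] at h3
      exact hmapT0 h2
  · -- the C statement
    have hsup1 : ∀ τ ∈ g1.support, τ 1 = 1 := by
      intro τ hτ
      refine support_monomial_mul_apply 1 1 (1 : ℚ) hbu τ ?_
      rw [show (monomial (Finsupp.single (1 : Fin 6) 1) (1 : ℚ)) = X 1 from rfl, ← hg1def]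
      exact hτ
    have hiny1 : inyForm 1 g1 = g1 := inyForm_eq_self 1 1 hg10 hsup1
    have hg1I : g1 ∈ ISpan := Ideal.subset_span (by simp)
    have hg1T : g1 ∈ T := by
      rw [← hiny1, hT]
      exact iny_mem hyc hGI hdiv hg1I hg10
    have hφ1g1 : φ1 g1 = X 2 * X 5 - X 0 ^ 2 := by
      have h1 : φ1 (X 1) = 1 := by rw [hφ1]; simp
      rw [hg1def, map_mul, h1, one_mul, hφ1, aeval_eq_self_of_yfree 1 1 hbu]
    have hu : (X 2 * X 5 - X 0 ^ 2 : MvPolynomial (Fin 6) ℚ) ∈ CIdeal 1 G := by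
      rw [← hφ1g1]
      exact hmapT1 (Ideal.mem_map_of_mem φ1 hg1T)
    rw [show (X 0 ^ 2 - X 2 * X 5 : MvPolynomial (Fin 6) ℚ)
      = -(X 2 * X 5 - X 0 ^ 2) from by ring]
    exact (CIdeal 1 G).neg_mem hu

end
end

section
/- For a square-free monomial ideal I ⊆ k[x_1,...,x_n] and a variable y, the equality in_y(I) = C_{y,I} ∩ (N_{y,I} + ⟨y⟩) always holds, i.e., every square-free monomial ideal has a geometric vertex decomposition with respect to every variable. -/
/-! A monomial ideal contains a polynomial iff it contains each of its terms, so `in_y` fixes it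
and all three ideals can be compared monomial by monomial. For a monomial `x^S`, divisibility by
some `x^F`, `F ∈ M`, means `F ⊆ S`; and `F ⊆ S` holds iff `F \ {y} ⊆ S` and either `y ∈ S` or
`y ∉ F`. -/

open MvPolynomial

noncomputable section

section SquarefreeMonomial

variable {σ R : Type*} [CommSemiring R]

theorem prod_X_eq_monomial_sum_single (F : Finset σ) :
    (∏ i ∈ F, X i : MvPolynomial σ R) = monomial (∑ i ∈ F, Finsupp.single i 1) 1 :=
  (monomial_sum_one F _).symm

theorem image_prod_X_eq_image_monomial (𝓕 : Set (Finset σ)) :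
    (fun F => ∏ i ∈ F, X i : Finset σ → MvPolynomial σ R) '' 𝓕
      = (fun s => monomial s 1) '' ((fun F => ∑ i ∈ F, Finsupp.single i 1) '' 𝓕) := by
  simp only [Set.image_image, prod_X_eq_monomial_sum_single]

theorem sum_single_one_le_iff {F : Finset σ} {m : σ →₀ ℕ} :
    ∑ i ∈ F, Finsupp.single i 1 ≤ m ↔ F ⊆ m.support := by
  classical
  simp only [Finsupp.le_def, Finsupp.finsetSum_apply, Finsupp.single_apply, Finset.sum_ite_eq',
    Finset.subset_iff, Finsupp.mem_support_iff]
  refine ⟨fun h i hi => ?_, fun h i => ?_⟩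
  · simpa [hi, Nat.one_le_iff_ne_zero] using h i
  · split_ifs with hi
    · exact Nat.one_le_iff_ne_zero.mpr (h hi)
    · exact Nat.zero_le _

theorem mem_ideal_span_prod_X_image {x : MvPolynomial σ R} {𝓕 : Set (Finset σ)} :
    x ∈ Ideal.span ((fun F => ∏ i ∈ F, X i) '' 𝓕) ↔ ∀ m ∈ x.support, ∃ F ∈ 𝓕, F ⊆ m.support := by
  simp only [image_prod_X_eq_image_monomial, mem_ideal_span_monomial_image, Set.exists_mem_image,
    sum_single_one_le_iff]

end SquarefreeMonomial

theorem Finset.exists_subset_iff_exists_erase_subset_and {α : Type*} [DecidableEq α]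
    (M : Set (Finset α)) (y : α) (S : Finset α) :
    (∃ F ∈ M, F ⊆ S) ↔ (∃ F ∈ M, F.erase y ⊆ S) ∧ ((∃ F ∈ M, y ∉ F ∧ F ⊆ S) ∨ y ∈ S) := by
  constructor
  · rintro ⟨F, hF, hFS⟩
    refine ⟨⟨F, hF, (F.erase_subset y).trans hFS⟩, ?_⟩
    by_cases hy : y ∈ F
    · exact Or.inr (hFS hy)
    · exact Or.inl ⟨F, hF, hy, hFS⟩
  · rintro ⟨⟨F, hF, hFS⟩, ⟨G, hG, -, hGS⟩ | hy⟩
    · exact ⟨G, hG, hGS⟩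
    · exact ⟨F, hF, (Finset.erase_subset_iff_of_mem hy).mp hFS⟩

section InitialYForm

variable {k : Type} [Field k] {n : ℕ}

theorem support_inyForm_subset (y : Fin n) (f : MvPolynomial (Fin n) k) :
    (inyForm y f).support ⊆ f.support := by
  intro m hm
  by_contra h
  refine mem_support_iff.mp hm ?_
  simp only [inyForm, coeff_sum, coeff_monomial]
  refine Finset.sum_eq_zero fun m' _ => ?_
  split_ifs with he
  · exact he ▸ notMem_support_iff.mp h
  · rfl

theorem inyForm_monomial (y : Fin n) (s : Fin n →₀ ℕ) (c : k) :
    inyForm y (monomial s c) = monomial s c := by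
  classical
  by_cases hc : c = 0
  · simp [inyForm, hc]
  have hs : (monomial s c).support = {s} := support_monomial.trans (if_neg hc)
  have hd : (monomial s c).degreeOf y = s y := by
    rw [degreeOf_eq_sup, hs, Finset.sup_singleton]
  rw [inyForm, hs, hd, Finset.filter_singleton, if_pos rfl, Finset.sum_singleton, coeff_monomial,
    if_pos rfl]

theorem inyIdeal_span_monomial_image (y : Fin n) (S : Set (Fin n →₀ ℕ)) :
    inyIdeal y (Ideal.span ((fun s => monomial s (1 : k)) '' S))
      = Ideal.span ((fun s => monomial s (1 : k)) '' S) := by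
  refine le_antisymm (Ideal.span_le.mpr ?_) (Ideal.span_le.mpr ?_)
  · rintro _ ⟨f, hf, rfl⟩
    rw [mem_ideal_span_monomial_image] at hf
    rw [SetLike.mem_coe, mem_ideal_span_monomial_image]
    exact fun m hm => hf m (support_inyForm_subset y f hm)
  · rintro _ ⟨s, hs, rfl⟩
    exact Ideal.subset_span ⟨monomial s 1, Ideal.subset_span ⟨s, hs, rfl⟩,
      (inyForm_monomial y s 1).symm⟩

end InitialYForm

theorem squarefree_monomial_gvd_general {k : Type} [Field k] {n : ℕ} (y : Fin n)
    (M : Set (Finset (Fin n))) :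
    inyIdeal y (Ideal.span { p : MvPolynomial (Fin n) k |
        ∃ F ∈ M, p = ∏ i ∈ F, MvPolynomial.X i })
      = Ideal.span { p : MvPolynomial (Fin n) k | ∃ F ∈ M, p = ∏ i ∈ F.erase y, MvPolynomial.X i }
        ⊓ (Ideal.span { p : MvPolynomial (Fin n) k | ∃ F ∈ M, y ∉ F ∧ p = ∏ i ∈ F, MvPolynomial.X i }
            + Ideal.span {MvPolynomial.X y}) := by
  have hI : { p : MvPolynomial (Fin n) k | ∃ F ∈ M, p = ∏ i ∈ F, X i }
      = (fun F => ∏ i ∈ F, X i) '' M := by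
    ext; simp [eq_comm]
  have hC : { p : MvPolynomial (Fin n) k | ∃ F ∈ M, p = ∏ i ∈ F.erase y, X i }
      = (fun F => ∏ i ∈ F, X i) '' ((·.erase y) '' M) := by
    ext; simp [eq_comm]
  have hN : { p : MvPolynomial (Fin n) k | ∃ F ∈ M, y ∉ F ∧ p = ∏ i ∈ F, X i } ∪ {X y}
      = (fun F => ∏ i ∈ F, X i) '' ({F ∈ M | y ∉ F} ∪ {{y}}) := by
    ext; simp [eq_comm, and_assoc]
  rw [hI, hC, image_prod_X_eq_image_monomial, inyIdeal_span_monomial_image,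
    ← image_prod_X_eq_image_monomial, Submodule.add_eq_sup, ← Ideal.span_union, hN]
  ext f
  simp only [Submodule.mem_inf, mem_ideal_span_prod_X_image, Set.exists_mem_image, Set.mem_union,
    Set.mem_ofPred_eq, Set.mem_singleton_iff, or_and_right, exists_or, exists_eq_left,
    Finset.singleton_subset_iff, and_assoc, ← forall₂_and]
  exact forall₂_congr fun m _ => Finset.exists_subset_iff_exists_erase_subset_and M y m.support

/-- every square-free monomial ideal has a geometric vertex decomposition with
respect to every variable: `in_y(I) = C_{y,I} ∩ (N_{y,I} + ⟨y⟩)`, where `I` is generated by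
the square-free monomials `∏_{i ∈ F} x_i`, `F ∈ M`, `M` an antichain (minimal generators). -/
theorem squarefree_monomial_gvd {k : Type} [Field k] {n : ℕ} (y : Fin n)
    (M : Set (Finset (Fin n))) (hmin : ∀ F ∈ M, ∀ G ∈ M, G ⊆ F → G = F) :
    inyIdeal y (Ideal.span { p : MvPolynomial (Fin n) k |
        ∃ F ∈ M, p = ∏ i ∈ F, MvPolynomial.X i })
      = Ideal.span { p : MvPolynomial (Fin n) k | ∃ F ∈ M, p = ∏ i ∈ F.erase y, MvPolynomial.X i }
        ⊓ (Ideal.span { p : MvPolynomial (Fin n) k | ∃ F ∈ M, y ∉ F ∧ p = ∏ i ∈ F, MvPolynomial.X i }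
            + Ideal.span {MvPolynomial.X y}) :=
  squarefree_monomial_gvd_general y M

end
end
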